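/- arXiv:1904.11608 — 8 statements merged into one kernel-verified Lean document; each statement's English description precedes it below -/
import Mathlib

section
/- Let G = ([W], E) be a connected graph in which every cycle has even length (i.e., G is bipartite), and let s ∈ (0,1)^W be a skill vector with no zero entries. Then for any α > 1 with α·max_i s_i ≤ 1, there exists s' ∈ [-1,1]^W with s' ∉ {s, -s} such that s'_i s'_j = s_i s_j for every edge (i,j) ∈ E. -/
/-!
Every closed walk of odd length contains a cycle of odd length, so a graph whose cycles are all
even is 2-colourable, with colour classes `U` and `T`. Multiplying `s` by `α` on `U` and dividing
it by `α` on `T` preserves every product along an edge; since `α > 1` and `α s ≤ 1`, the new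
vector stays in `(0, 1]` and differs from `s` and `-s` at every vertex.
-/

open SimpleGraph Walk

namespace SimpleGraph

variable {V : Type*} {G : SimpleGraph V}

lemma Walk.exists_loop_of_not_isPath {u v : V} (q : G.Walk u v) (hq : ¬q.IsPath) :
    ∃ (x : V) (c : G.Walk x x) (r : G.Walk u v),
      0 < c.length ∧ c.length + r.length = q.length := by
  classical
  induction q with
  | nil => exact absurd IsPath.nil hq
  | @cons a b _ h q ih =>
    by_cases ha : a ∈ q.support
    · refine ⟨a, cons h (q.takeUntil a ha), q.dropUntil a ha, by simp, ?_⟩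
      have := congrArg length (q.take_spec ha)
      rw [length_append] at this
      simp only [length_cons]
      omega
    · obtain ⟨x, c, r, hc, hlen⟩ := ih fun hq' => hq (hq'.cons ha)
      exact ⟨x, c, cons h r, hc, by simp only [length_cons]; omega⟩

/-- Splitting off a loop divides an odd closed walk into two shorter closed walks, one of them
odd; a closed walk that cannot be split this way is a cycle. -/
theorem Walk.exists_isCycle_odd_length {u : V} (p : G.Walk u u) (hp : Odd p.length) :
    ∃ (v : V) (c : G.Walk v v), c.IsCycle ∧ Odd c.length := by
  induction hn : p.length using Nat.strong_induction_on generalizing u with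
  | _ n ih =>
  cases p with
  | nil => simp at hp
  | cons h q =>
    by_cases hq : q.IsPath
    · refine ⟨u, cons h q,
        isCycle_iff_isPath_tail_and_le_length.mpr ⟨by simpa using hq, ?_⟩, hp⟩
      have hq0 : q.length ≠ 0 := fun h0 => h.ne (q.eq_of_length_eq_zero h0).symm
      rw [length_cons] at hp ⊢
      rcases hp with ⟨k, hk⟩
      omega
    · obtain ⟨x, c, r, hc, hlen⟩ := q.exists_loop_of_not_isPath hq
      rw [length_cons] at hp hn
      rcases Nat.even_or_odd c.length with hc' | hc'
      · have hr : Odd (cons h r).length := by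
          rw [length_cons, Nat.odd_iff]
          rw [Nat.odd_iff] at hp
          rw [Nat.even_iff] at hc'
          omega
        exact ih _ (by rw [length_cons]; omega) (cons h r) hr rfl
      · exact ih _ (by omega) c hc' rfl

theorem isBipartite_of_forall_isCycle_even
    (h : ∀ (v : V) (c : G.Walk v v), c.IsCycle → Even c.length) : G.IsBipartite :=
  two_colorable_iff_forall_loop_even.mpr fun u p => by
    by_contra hp
    obtain ⟨v, c, hc, hodd⟩ := p.exists_isCycle_odd_length (Nat.not_even_iff_odd.mp hp)
    exact Nat.not_even_iff_odd.mpr hodd (h v c hc)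

section Rescale

variable {K : Type*} [Field K]

open Classical in
noncomputable def rescaleOn (U : Set V) (α : K) (s : V → K) : V → K :=
  fun i => if i ∈ U then α * s i else s i / α

theorem IsBipartiteWith.rescaleOn_mul_of_adj {U T : Set V} (hG : G.IsBipartiteWith U T)
    {α : K} (hα : α ≠ 0) (s : V → K) {i j : V} (hij : G.Adj i j) :
    rescaleOn U α s i * rescaleOn U α s j = s i * s j := by
  rcases hG.mem_of_adj hij with ⟨hi, hj⟩ | ⟨hi, hj⟩
  · have hj' : j ∉ U := Set.disjoint_right.mp hG.disjoint hj
    simp only [rescaleOn, hi, hj', if_true, if_false]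
    field_simp
  · have hi' : i ∉ U := Set.disjoint_right.mp hG.disjoint hi
    simp only [rescaleOn, hi', hj, if_true, if_false]
    field_simp

theorem rescaleOn_pos [LinearOrder K] [IsStrictOrderedRing K] {U : Set V} {α : K} (hα : 0 < α)
    {s : V → K} {i : V} (hs : 0 < s i) : 0 < rescaleOn U α s i := by
  unfold rescaleOn; split_ifs <;> positivity

theorem rescaleOn_le_one [LinearOrder K] [IsStrictOrderedRing K] {U : Set V} {α : K}
    (hα : 1 ≤ α) {s : V → K} {i : V} (hs : 0 ≤ s i) (hαs : α * s i ≤ 1) :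
    rescaleOn U α s i ≤ 1 := by
  unfold rescaleOn
  split_ifs
  · exact hαs
  · calc s i / α ≤ s i := div_le_self hs hα
      _ ≤ α * s i := le_mul_of_one_le_left hs hα
      _ ≤ 1 := hαs

theorem rescaleOn_ne {U : Set V} {α : K} (hα0 : α ≠ 0) (hα1 : α ≠ 1) {s : V → K} {i : V}
    (hs : s i ≠ 0) : rescaleOn U α s i ≠ s i := by
  unfold rescaleOn
  split_ifs
  · exact fun h => hα1 (mul_right_cancel₀ hs (h.trans (one_mul _).symm))
  · rw [Ne, div_eq_iff hα0]
    exact fun h => hα1 (mul_left_cancel₀ hs (h.symm.trans (mul_one _).symm))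

end Rescale

end SimpleGraph

theorem stmt3_general (W : ℕ) (hW : 0 < W) (G : SimpleGraph (Fin W))
    (heven : ∀ (v : Fin W) (p : G.Walk v v), p.IsCycle → Even p.length)
    (s : Fin W → ℝ) (hs : ∀ i, 0 < s i ∧ s i < 1)
    (α : ℝ) (hα : 1 < α) (hαs : ∀ i, α * s i ≤ 1) :
    ∃ s' : Fin W → ℝ, (∀ i, s' i ∈ Set.Icc (-1 : ℝ) 1) ∧
      s' ≠ s ∧ s' ≠ (fun i => - s i) ∧
      ∀ i j, G.Adj i j → s' i * s' j = s i * s j := by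
  obtain ⟨U, T, hUT⟩ := (isBipartite_of_forall_isCycle_even heven).exists_isBipartiteWith
  have hα0 : 0 < α := zero_lt_one.trans hα
  have hpos i : 0 < rescaleOn U α s i := rescaleOn_pos hα0 (hs i).1
  let v : Fin W := ⟨0, hW⟩
  refine ⟨rescaleOn U α s, fun i => ⟨by linarith [hpos i], ?_⟩, fun h => ?_, fun h => ?_,
    fun i j => hUT.rescaleOn_mul_of_adj hα0.ne' s⟩
  · exact rescaleOn_le_one hα.le (hs i).1.le (hαs i)
  · exact rescaleOn_ne hα0.ne' hα.ne' (hs v).1.ne' (congrFun h v)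
  · linarith [hpos v, (hs v).1, congrFun h v]

/-- On a connected bipartite graph (every cycle has even length), skills are not
identifiable: for `s ∈ (0,1)^W` and any `α > 1` with `α · s_i ≤ 1` for all `i`, there is
`s' ∈ [-1,1]^W` with `s' ∉ {s, -s}` such that `s'_i s'_j = s_i s_j` on every edge. -/
theorem stmt3 (W : ℕ) (hW : 0 < W) (G : SimpleGraph (Fin W)) (hconn : G.Connected)
    (heven : ∀ (v : Fin W) (p : G.Walk v v), p.IsCycle → Even p.length)
    (s : Fin W → ℝ) (hs : ∀ i, 0 < s i ∧ s i < 1)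
    (α : ℝ) (hα : 1 < α) (hαs : ∀ i, α * s i ≤ 1) :
    ∃ s' : Fin W → ℝ, (∀ i, s' i ∈ Set.Icc (-1 : ℝ) 1) ∧
      s' ≠ s ∧ s' ≠ (fun i => - s i) ∧
      ∀ i j, G.Adj i j → s' i * s' j = s i * s j :=
  stmt3_general W hW G heven s hs α hα hαs
end

section
/- Let 1, 2, ..., 2k+1 be the vertices of an odd cycle in a graph and s ∈ R^W a vector with nonzero entries. Define C_{ij} = s_i s_j. Then s_1^2 = C_{1,2k+1} · C_{2k+1,2k}^{-1} · C_{2k,2k-1} · C_{2k-1,2k-2}^{-1} ⋯ C_{2,1}, i.e., the alternating product of edge correlations around an odd cycle equals the square of the skill at the starting vertex; in particular |s_1| is recoverable from the correlations along the cycle. -/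
/-! Consecutive edges `(m, m+1)` and `(m+1, m+2)` enter with opposite exponents, so the shared
vertex `m+1` cancels and the alternating product over the path `1, 2, …, 2k+1` telescopes to
`s 1 / s (2k+1)`; the closing edge `C_{1,2k+1} = s 1 * s (2k+1)` then leaves `s 1 ^ 2`. -/

open Finset

lemma prod_Icc_alternating_edges_eq_div {K : Type*} [Field K] (k : ℕ) (s : ℕ → K)
    (hs : ∀ i, s i ≠ 0) :
    ∏ m ∈ Icc 1 (2 * k), (s (m + 1) * s m) ^ (if Odd m then (1 : ℤ) else -1) =
      s 1 / s (2 * k + 1) := by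
  induction k with
  | zero => simp [div_self (hs 1)]
  | succ n ih =>
    have hodd : Odd (2 * n + 1) := odd_two_mul_add_one n
    have heven : ¬Odd (2 * n + 1 + 1) := by simp [parity_simps]
    rw [show 2 * (n + 1) = 2 * n + 1 + 1 by ring, prod_Icc_succ_top (by omega),
      prod_Icc_succ_top (by omega), ih, if_pos hodd, if_neg heven, zpow_one, zpow_neg_one]
    field_simp [hs (2 * n + 1), hs (2 * n + 1 + 1), hs (2 * n + 1 + 1 + 1)]

theorem stmt5_general (k : ℕ) (s : ℕ → ℝ) (hs : ∀ i, s i ≠ 0) :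
    (s 1) ^ 2 = (s 1 * s (2 * k + 1)) *
      ∏ m ∈ Finset.Icc 1 (2 * k), (s (m + 1) * s m) ^ (if Odd m then (1 : ℤ) else -1) := by
  rw [prod_Icc_alternating_edges_eq_div k s hs]
  field_simp [hs (2 * k + 1)]

/-- Around an odd cycle with vertices `1, 2, …, 2k+1` and correlations `C_{ij} = s_i s_j`,
the alternating product of edge correlations recovers the square of the skill at the
starting vertex: `s_1² = C_{1,2k+1} · C_{2k+1,2k}⁻¹ · C_{2k,2k-1} ⋯ C_{2,1}`. -/
theorem stmt5 (k : ℕ) (hk : 0 < k) (s : ℕ → ℝ) (hs : ∀ i, s i ≠ 0) :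
    (s 1) ^ 2 = (s 1 * s (2 * k + 1)) *
      ∏ m ∈ Finset.Icc 1 (2 * k), (s (m + 1) * s m) ^ (if Odd m then (1 : ℤ) else -1) :=
  stmt5_general k s hs
end

section
/- Let N be a W×W symmetric nonnegative matrix with zero diagonal whose associated graph (edges where N_{ij} > 0) is connected and non-bipartite. Let s ∈ R^W with s > 0 entrywise. If x ∈ R^W with x > 0 entrywise satisfies Σ_j N_{ij}(x_i x_j - s_i s_j) x_j = 0 for all i = 1,...,W, then x = s. -/
/-!
Write `r = x / s`. Stationarity says that at every vertex `i` the positively weighted sum of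
`r i * r j - 1` over the neighbours `j` vanishes. At a vertex where `r` is maximal, some neighbour
has `r i * r j ≤ 1`, and at a vertex where `r` is minimal some neighbour has `r i * r j ≥ 1`; hence
`min r * max r = 1`. Then the neighbours of a maximal vertex are all minimal and vice versa, so by
connectedness `r u * r v = 1` on every edge. Thus `log r` changes sign along each edge, and an odd
closed walk forces `log r = 0`.
-/

open Finset

namespace SimpleGraph

variable {V : Type*} {G : SimpleGraph V}

theorem Connected.induction_on_adj (hG : G.Connected) {P : V → Prop} {a : V} (ha : P a)
    (h : ∀ u v, G.Adj u v → P u → P v) (b : V) : P b := by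
  obtain ⟨p⟩ := hG.preconnected a b
  induction p with
  | nil => exact ha
  | cons hadj _ ih => exact ih (h _ _ hadj ha)

theorem Walk.apply_eq_neg_one_pow_length_mul {R : Type*} [Ring R] {g : V → R}
    (hg : ∀ u v, G.Adj u v → g u + g v = 0) {a b : V} (p : G.Walk a b) :
    g b = (-1) ^ p.length * g a := by
  induction p with
  | nil => simp
  | @cons u v _ hadj _ ih =>
    rw [ih, length_cons, pow_succ, eq_neg_of_add_eq_zero_right (hg u v hadj)]
    noncomm_ring

theorem Connected.eq_zero_of_adj_add_eq_zero {R : Type*} [Ring R] [NoZeroDivisors R] [CharZero R]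
    (hG : G.Connected) (hodd : ∃ (v : V) (p : G.Walk v v), Odd p.length) {g : V → R}
    (hg : ∀ u v, G.Adj u v → g u + g v = 0) : g = 0 := by
  obtain ⟨v, p, hp⟩ := hodd
  have hv : g v = 0 := by
    have := p.apply_eq_neg_one_pow_length_mul hg
    rwa [hp.neg_one_pow, neg_one_mul, self_eq_neg] at this
  funext b
  obtain ⟨q⟩ := hG.preconnected v b
  rw [q.apply_eq_neg_one_pow_length_mul hg, hv, mul_zero, Pi.zero_apply]

section WeightedSum

variable [Fintype V] {i : V} {u c : V → ℝ}

theorem eq_zero_of_sum_mul_eq_zero_of_forall_adj_nonneg (hu_pos : ∀ j, G.Adj i j → 0 < u j)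
    (hu_zero : ∀ j, ¬G.Adj i j → u j = 0) (hsum : ∑ j, u j * c j = 0)
    (hc : ∀ j, G.Adj i j → 0 ≤ c j) {j : V} (hj : G.Adj i j) : c j = 0 := by
  have hterm : ∀ k ∈ univ, 0 ≤ u k * c k := by
    intro k _
    by_cases hk : G.Adj i k
    · exact mul_nonneg (hu_pos k hk).le (hc k hk)
    · simp [hu_zero k hk]
  have := (sum_eq_zero_iff_of_nonneg hterm).1 hsum j (mem_univ j)
  exact (mul_eq_zero.1 this).resolve_left (hu_pos j hj).ne'

theorem eq_zero_of_sum_mul_eq_zero_of_forall_adj_nonpos (hu_pos : ∀ j, G.Adj i j → 0 < u j)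
    (hu_zero : ∀ j, ¬G.Adj i j → u j = 0) (hsum : ∑ j, u j * c j = 0)
    (hc : ∀ j, G.Adj i j → c j ≤ 0) {j : V} (hj : G.Adj i j) : c j = 0 := by
  have hsum' : ∑ j, u j * -c j = 0 := by simp [hsum]
  simpa using eq_zero_of_sum_mul_eq_zero_of_forall_adj_nonneg (c := -c) hu_pos hu_zero hsum'
    (fun k hk => neg_nonneg.2 (hc k hk)) hj

theorem exists_adj_nonpos_of_sum_mul_eq_zero (hu_pos : ∀ j, G.Adj i j → 0 < u j)
    (hu_zero : ∀ j, ¬G.Adj i j → u j = 0) (hsum : ∑ j, u j * c j = 0) (hi : ∃ j, G.Adj i j) :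
    ∃ j, G.Adj i j ∧ c j ≤ 0 := by
  by_contra! h
  obtain ⟨j, hj⟩ := hi
  exact (h j hj).ne' (eq_zero_of_sum_mul_eq_zero_of_forall_adj_nonneg hu_pos hu_zero hsum
    (fun k hk => (h k hk).le) hj)

theorem exists_adj_nonneg_of_sum_mul_eq_zero (hu_pos : ∀ j, G.Adj i j → 0 < u j)
    (hu_zero : ∀ j, ¬G.Adj i j → u j = 0) (hsum : ∑ j, u j * c j = 0) (hi : ∃ j, G.Adj i j) :
    ∃ j, G.Adj i j ∧ 0 ≤ c j := by
  have hsum' : ∑ j, u j * -c j = 0 := by simp [hsum]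
  simpa using exists_adj_nonpos_of_sum_mul_eq_zero (c := -c) hu_pos hu_zero hsum' hi

end WeightedSum

section Balanced

variable [Fintype V] {w : V → V → ℝ} {r : V → ℝ}

theorem Connected.mul_eq_one_of_adj (hG : G.Connected) (hnbr : ∀ i, ∃ j, G.Adj i j)
    (hw_pos : ∀ i j, G.Adj i j → 0 < w i j) (hw_zero : ∀ i j, ¬G.Adj i j → w i j = 0)
    (hr : ∀ i, 0 < r i) (hbal : ∀ i, ∑ j, w i j * (r i * r j - 1) = 0) {u v : V}
    (huv : G.Adj u v) : r u * r v = 1 := by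
  have : Nonempty V := ⟨u⟩
  obtain ⟨iM, hiM⟩ := Finite.exists_max r
  obtain ⟨im, him⟩ := Finite.exists_min r
  have hmM : r im * r iM = 1 := by
    obtain ⟨j, -, hj⟩ :=
      exists_adj_nonpos_of_sum_mul_eq_zero (hw_pos iM) (hw_zero iM) (hbal iM) (hnbr iM)
    obtain ⟨k, -, hk⟩ :=
      exists_adj_nonneg_of_sum_mul_eq_zero (hw_pos im) (hw_zero im) (hbal im) (hnbr im)
    exact le_antisymm (by linarith [mul_le_mul_of_nonneg_left (him j) (hr iM).le])
      (by linarith [mul_le_mul_of_nonneg_left (hiM k) (hr im).le])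
  have hflip : ∀ i j, G.Adj i j → r i = r iM ∨ r i = r im → r i * r j = 1 := by
    rintro i j hij (hi | hi)
    · have := eq_zero_of_sum_mul_eq_zero_of_forall_adj_nonneg (hw_pos i) (hw_zero i) (hbal i)
        (fun k _ => by rw [hi]; linarith [mul_le_mul_of_nonneg_left (him k) (hr iM).le]) hij
      linarith
    · have := eq_zero_of_sum_mul_eq_zero_of_forall_adj_nonpos (hw_pos i) (hw_zero i) (hbal i)
        (fun k _ => by rw [hi]; linarith [mul_le_mul_of_nonneg_left (hiM k) (hr im).le]) hij
      linarith
  have hext : ∀ i, r i = r iM ∨ r i = r im := by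
    refine hG.induction_on_adj (Or.inl rfl) fun i j hij hi => ?_
    have := hflip i j hij hi
    rcases hi with hi | hi
    · exact Or.inr (mul_left_cancel₀ (hr i).ne' (by rw [this, hi, mul_comm, hmM]))
    · exact Or.inl (mul_left_cancel₀ (hr i).ne' (by rw [this, hi, hmM]))
  exact hflip u v huv (hext u)

theorem Connected.eq_one_of_sum_mul_mul_sub_one_eq_zero (hG : G.Connected)
    (hodd : ∃ (v : V) (p : G.Walk v v), Odd p.length)
    (hw_pos : ∀ i j, G.Adj i j → 0 < w i j) (hw_zero : ∀ i j, ¬G.Adj i j → w i j = 0)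
    (hr : ∀ i, 0 < r i) (hbal : ∀ i, ∑ j, w i j * (r i * r j - 1) = 0) : r = 1 := by
  have hnbr : ∀ i, ∃ j, G.Adj i j := by
    obtain ⟨v, p, hp⟩ := hodd
    cases p with
    | nil => simp at hp
    | cons h _ =>
      have := h.nontrivial
      exact hG.preconnected.exists_adj_of_nontrivial
  have hlog : (fun i => Real.log (r i)) = 0 := by
    refine hG.eq_zero_of_adj_add_eq_zero hodd fun u v huv => ?_
    rw [← Real.log_mul (hr u).ne' (hr v).ne',
      hG.mul_eq_one_of_adj hnbr hw_pos hw_zero hr hbal huv, Real.log_one]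
  funext i
  rw [← Real.exp_log (hr i), congrFun hlog i, Pi.zero_apply, Real.exp_zero, Pi.one_apply]

end Balanced

end SimpleGraph

theorem stmt7_general (W : ℕ) (N : Matrix (Fin W) (Fin W) ℝ)
    (hnonneg : ∀ i j, 0 ≤ N i j)
    (hdiag : ∀ i, N i i = 0)
    (G : SimpleGraph (Fin W)) (hadj : ∀ i j, G.Adj i j ↔ i ≠ j ∧ 0 < N i j)
    (hconn : G.Connected)
    (hodd : ∃ (v : Fin W) (p : G.Walk v v), p.IsCycle ∧ Odd p.length)
    (s x : Fin W → ℝ) (hs : ∀ i, 0 < s i) (hx : ∀ i, 0 < x i)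
    (hstat : ∀ i, ∑ j, N i j * (x i * x j - s i * s j) * x j = 0) :
    x = s := by
  have hN_zero : ∀ i j, ¬G.Adj i j → N i j = 0 := by
    intro i j hij
    rcases eq_or_ne i j with rfl | hne
    · exact hdiag i
    · exact le_antisymm (not_lt.1 fun h => hij ((hadj i j).2 ⟨hne, h⟩)) (hnonneg i j)
  have hr : x / s = 1 := by
    refine hconn.eq_one_of_sum_mul_mul_sub_one_eq_zero (w := fun i j => N i j * x j * (s i * s j))
      (hodd.imp fun _ ⟨p, _, hp⟩ => ⟨p, hp⟩) (fun i j hij => ?_) (fun i j hij => ?_)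
      (fun i => div_pos (hx i) (hs i)) (fun i => ?_)
    · exact mul_pos (mul_pos ((hadj i j).1 hij).2 (hx j)) (mul_pos (hs i) (hs j))
    · simp [hN_zero i j hij]
    · rw [← hstat i]
      refine sum_congr rfl fun j _ => ?_
      have := (hs i).ne'; have := (hs j).ne'
      simp only [Pi.div_apply]
      field_simp
  funext i
  simpa [div_eq_one_iff_eq (hs i).ne'] using congrFun hr i

/-- For a symmetric nonnegative weight matrix `N` with zero diagonal whose associated graph
(edges where `N_{ij} > 0`) is connected and non-bipartite (has an odd cycle), the only
entrywise-positive stationary point of the weighted rank-one loss is `x = s`. -/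
theorem stmt7 (W : ℕ) (N : Matrix (Fin W) (Fin W) ℝ)
    (hsymm : ∀ i j, N i j = N j i) (hnonneg : ∀ i j, 0 ≤ N i j)
    (hdiag : ∀ i, N i i = 0)
    (G : SimpleGraph (Fin W)) (hadj : ∀ i j, G.Adj i j ↔ i ≠ j ∧ 0 < N i j)
    (hconn : G.Connected)
    (hodd : ∃ (v : Fin W) (p : G.Walk v v), p.IsCycle ∧ Odd p.length)
    (s x : Fin W → ℝ) (hs : ∀ i, 0 < s i) (hx : ∀ i, 0 < x i)
    (hstat : ∀ i, ∑ j, N i j * (x i * x j - s i * s j) * x j = 0) :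
    x = s :=
  stmt7_general W N hnonneg hdiag G hadj hconn hodd s x hs hx hstat
end

section
/- Let Z be a W×W nonnegative symmetric irreducible matrix with zero diagonal whose associated graph is non-bipartite, and let u ∈ R^W be entrywise positive with u not equal to the all-ones vector. Then the diagonal of Z(u u^T − 1 1^T) is not identically zero; i.e., there exists i with Σ_j Z_{ij}(u_i u_j − 1) ≠ 0. -/
/-- For a nonnegative symmetric irreducible matrix `Z` with zero diagonal whose associated
graph is non-bipartite, and any entrywise-positive `u` not equal to the all-ones vector,
the diagonal of `Z (u uᵀ − 1 1ᵀ)` is not identically zero. -/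
theorem stmt8 (W : ℕ) (Z : Matrix (Fin W) (Fin W) ℝ)
    (hsymm : ∀ i j, Z i j = Z j i) (hnonneg : ∀ i j, 0 ≤ Z i j)
    (hdiag : ∀ i, Z i i = 0)
    (G : SimpleGraph (Fin W)) (hadj : ∀ i j, G.Adj i j ↔ i ≠ j ∧ 0 < Z i j)
    (hconn : G.Connected)
    (hodd : ∃ (v : Fin W) (p : G.Walk v v), p.IsCycle ∧ Odd p.length)
    (u : Fin W → ℝ) (hu : ∀ i, 0 < u i) (hu1 : u ≠ fun _ => 1) :
    ∃ i, ∑ j, Z i j * (u i * u j - 1) ≠ 0 := by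
  by_contra hcon
  push_neg at hcon
  obtain ⟨v, p, hcyc, hoddlen⟩ := hodd
  -- there is at least one edge
  have hedge : ∃ a b : Fin W, G.Adj a b := by
    cases p with
    | nil => exact absurd hoddlen (by simp)
    | cons h _ => exact ⟨_, _, h⟩
  obtain ⟨a0, b0, hab⟩ := hedge
  have hW2 : Nontrivial (Fin W) := ⟨a0, b0, hab.ne⟩
  -- every vertex has a neighbor
  have hnbr : ∀ i : Fin W, ∃ j, G.Adj i j := by
    intro i
    obtain ⟨j, hj⟩ := exists_ne i
    obtain ⟨q⟩ := hconn i j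
    cases q with
    | nil => exact absurd rfl hj
    | cons h _ => exact ⟨_, h⟩
  -- positivity of row sums
  have hdpos : ∀ i, 0 < ∑ j, Z i j := by
    intro i
    obtain ⟨j, hj⟩ := hnbr i
    exact Finset.sum_pos' (fun k _ => hnonneg i k)
      ⟨j, Finset.mem_univ j, ((hadj i j).1 hj).2⟩
  -- the key balance identity
  have hkey : ∀ i, u i * (∑ j, Z i j * u j) = ∑ j, Z i j := by
    intro i
    have hexp : ∑ j, Z i j * (u i * u j - 1)
        = u i * (∑ j, Z i j * u j) - ∑ j, Z i j := by
      rw [Finset.mul_sum, ← Finset.sum_sub_distrib]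
      exact Finset.sum_congr rfl (fun j _ => by ring)
    have := hcon i
    rw [hexp] at this
    linarith
  -- min and max of u
  obtain ⟨i0, -, hmin⟩ := Finset.exists_min_image Finset.univ u Finset.univ_nonempty
  obtain ⟨i1, -, hmax⟩ := Finset.exists_max_image Finset.univ u Finset.univ_nonempty
  have hmin' : ∀ j, u i0 ≤ u j := fun j => hmin j (Finset.mem_univ j)
  have hmax' : ∀ j, u j ≤ u i1 := fun j => hmax j (Finset.mem_univ j)
  -- bounds on weighted sums
  have hSlb : ∀ i, u i0 * (∑ j, Z i j) ≤ ∑ j, Z i j * u j := by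
    intro i
    rw [Finset.mul_sum]
    refine Finset.sum_le_sum (fun j _ => ?_)
    calc u i0 * Z i j = Z i j * u i0 := mul_comm _ _
      _ ≤ Z i j * u j := mul_le_mul_of_nonneg_left (hmin' j) (hnonneg i j)
  have hSub : ∀ i, (∑ j, Z i j * u j) ≤ u i1 * (∑ j, Z i j) := by
    intro i
    rw [Finset.mul_sum]
    refine Finset.sum_le_sum (fun j _ => ?_)
    calc Z i j * u j ≤ Z i j * u i1 := mul_le_mul_of_nonneg_left (hmax' j) (hnonneg i j)
      _ = u i1 * Z i j := mul_comm _ _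
  -- the product of min and max is 1
  have hge : 1 ≤ u i0 * u i1 := by
    nlinarith [hkey i0, hSub i0, hdpos i0, hu i0]
  have hle : u i0 * u i1 ≤ 1 := by
    nlinarith [hkey i1, hSlb i1, hdpos i1, hu i1]
  have hmm : u i0 * u i1 = 1 := le_antisymm hle hge
  -- case: u is constant
  by_cases hconst : u i0 = u i1
  · have hone : u i0 = 1 := by nlinarith [hu i0]
    refine hu1 (funext fun j => ?_)
    have h1 : u i0 ≤ u j := hmin' j
    have h2 : u j ≤ u i1 := hmax' j
    rw [← hconst] at h2
    show u j = 1
    linarith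
  have hlt : u i0 < u i1 := lt_of_le_of_ne (hmin' i1) hconst
  -- neighbors of a max vertex are min vertices
  have nbrM : ∀ i, u i = u i1 → ∀ j, G.Adj i j → u j = u i0 := by
    intro i hi j hij
    have h1 : u i1 * (∑ k, Z i k * u k) = ∑ k, Z i k := by rw [← hi]; exact hkey i
    have h2 : (∑ k, Z i k * u i0) = ∑ k, Z i k * u k := by
      have : (∑ k, Z i k * u i0) = u i0 * (u i1 * (∑ k, Z i k * u k)) := by
        rw [h1, ← Finset.sum_mul, mul_comm]
      rw [this, ← mul_assoc, hmm, one_mul]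
    have heq := (Finset.sum_eq_sum_iff_of_le
      (fun k _ => mul_le_mul_of_nonneg_left (hmin' k) (hnonneg i k))).1 h2
      j (Finset.mem_univ j)
    have hZ : 0 < Z i j := ((hadj i j).1 hij).2
    exact (mul_left_cancel₀ (ne_of_gt hZ) heq.symm)
  -- neighbors of a min vertex are max vertices
  have nbrm : ∀ i, u i = u i0 → ∀ j, G.Adj i j → u j = u i1 := by
    intro i hi j hij
    have h1 : u i0 * (∑ k, Z i k * u k) = ∑ k, Z i k := by rw [← hi]; exact hkey i
    have h2 : (∑ k, Z i k * u k) = ∑ k, Z i k * u i1 := by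
      have : (∑ k, Z i k * u i1) = u i1 * (u i0 * (∑ k, Z i k * u k)) := by
        rw [h1, ← Finset.sum_mul, mul_comm]
      rw [this, ← mul_assoc, mul_comm (u i1) (u i0), hmm, one_mul]
    have heq := (Finset.sum_eq_sum_iff_of_le
      (fun k _ => mul_le_mul_of_nonneg_left (hmax' k) (hnonneg i k))).1 h2
      j (Finset.mem_univ j)
    have hZ : 0 < Z i j := ((hadj i j).1 hij).2
    exact (mul_left_cancel₀ (ne_of_gt hZ) heq)
  -- values alternate along walks
  have alt : ∀ (a b : Fin W) (q : G.Walk a b),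
      (u a = u i1 → u b = if Even q.length then u i1 else u i0) ∧
      (u a = u i0 → u b = if Even q.length then u i0 else u i1) := by
    intro a b q
    induction q with
    | nil => simp
    | cons h q ih =>
      simp only [SimpleGraph.Walk.length_cons]
      constructor
      · intro ha
        have hc := nbrM _ ha _ h
        have hb := ih.2 hc
        by_cases he : Even q.length <;>
          simp [he, Nat.even_add_one] at hb ⊢ <;> exact hb
      · intro ha
        have hc := nbrm _ ha _ h
        have hb := ih.1 hc
        by_cases he : Even q.length <;>
          simp [he, Nat.even_add_one] at hb ⊢ <;> exact hb
  -- u v is either the min or the max value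
  obtain ⟨q⟩ := hconn i1 v
  have hv : u v = u i1 ∨ u v = u i0 := by
    have := (alt i1 v q).1 rfl
    by_cases he : Even q.length
    · left; rwa [if_pos he] at this
    · right; rwa [if_neg he] at this
  have hodd' : ¬ Even p.length := Nat.not_even_iff_odd.mpr hoddlen
  rcases hv with hv | hv
  · have := (alt v v p).1 hv
    rw [if_neg hodd', hv] at this
    linarith
  · have := (alt v v p).2 hv
    rw [if_neg hodd', hv] at this
    linarith
end

section
/- Define V(x) = max_i max(x_i/s_i, s_i/x_i) for positive vectors x, s ∈ R^W. Consider one gradient step x'_i = x_i − η Σ_j N_{ij} x_j (x_i x_j − s_i s_j) with N a nonnegative symmetric matrix with zero diagonal and step-size η > 0 satisfying η ‖N D_s^2‖_∞ V(x)^2 ≤ 1, where D_s = diag(s). Then V(x') ≤ V(x). -/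
/-- One gradient step does not increase the Lyapunov function
`V(x) = max_i max(x_i/s_i, s_i/x_i)`, provided the step-size satisfies
`η ‖N D_s²‖_∞ V(x)² ≤ 1` (here `‖·‖_∞` is the max absolute row sum norm). -/
theorem stmt9 (W : ℕ) (N : Matrix (Fin W) (Fin W) ℝ)
    (hsymm : ∀ i j, N i j = N j i) (hnonneg : ∀ i j, 0 ≤ N i j)
    (hdiag : ∀ i, N i i = 0)
    (s x : Fin W → ℝ) (hs : ∀ i, 0 < s i) (hx : ∀ i, 0 < x i)
    (η : ℝ) (hη : 0 < η)
    (hstep : η * (⨆ i, ∑ j, |N i j| * (s j) ^ 2) *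
        (⨆ i, max (x i / s i) (s i / x i)) ^ 2 ≤ 1)
    (x' : Fin W → ℝ)
    (hx' : ∀ i, x' i = x i - η * ∑ j, N i j * x j * (x i * x j - s i * s j)) :
    (⨆ i, max (x' i / s i) (s i / x' i)) ≤ ⨆ i, max (x i / s i) (s i / x i) := by
  rcases Nat.eq_zero_or_pos W with hW | hW
  · subst hW
    rw [iSup_of_empty', iSup_of_empty']
  have hne : Nonempty (Fin W) := ⟨⟨0, hW⟩⟩
  set V := ⨆ i, max (x i / s i) (s i / x i) with hVdef
  have hVmem : ∀ i, max (x i / s i) (s i / x i) ≤ V := fun i =>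
    le_ciSup (f := fun i => max (x i / s i) (s i / x i))
      (Set.Finite.bddAbove (Set.finite_range _)) i
  set i0 : Fin W := ⟨0, hW⟩
  have hVpos : 0 < V :=
    lt_of_lt_of_le (div_pos (hx i0) (hs i0)) ((le_max_left _ _).trans (hVmem i0))
  have hxu : ∀ j, x j ≤ V * s j := fun j => by
    have h := (le_max_left (x j / s j) (s j / x j)).trans (hVmem j)
    rwa [div_le_iff₀ (hs j)] at h
  have hxl : ∀ j, s j ≤ V * x j := fun j => by
    have h := (le_max_right (x j / s j) (s j / x j)).trans (hVmem j)
    rwa [div_le_iff₀ (hx j)] at h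
  set K := ⨆ i, ∑ j, |N i j| * (s j) ^ 2 with hKdef
  have hKmem : ∀ i, ∑ j, |N i j| * (s j) ^ 2 ≤ K := fun i =>
    le_ciSup (f := fun i => ∑ j, |N i j| * (s j) ^ 2)
      (Set.Finite.bddAbove (Set.finite_range _)) i
  have hA : ∀ i, ∑ j, N i j * (x j) ^ 2 ≤ K * V ^ 2 := fun i => by
    calc ∑ j, N i j * (x j) ^ 2 ≤ ∑ j, |N i j| * (s j) ^ 2 * V ^ 2 := by
          apply Finset.sum_le_sum
          intro j _
          rw [abs_of_nonneg (hnonneg i j)]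
          have h1 : (x j) ^ 2 ≤ (V * s j) ^ 2 :=
            pow_le_pow_left₀ (le_of_lt (hx j)) (hxu j) 2
          nlinarith [hnonneg i j]
      _ = (∑ j, |N i j| * (s j) ^ 2) * V ^ 2 := by rw [← Finset.sum_mul]
      _ ≤ K * V ^ 2 := by
          have := hKmem i
          nlinarith [sq_nonneg V]
  have hηA : ∀ i, η * ∑ j, N i j * (x j) ^ 2 ≤ 1 := fun i => by
    calc η * ∑ j, N i j * (x j) ^ 2 ≤ η * (K * V ^ 2) :=
          mul_le_mul_of_nonneg_left (hA i) hη.le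
      _ = η * K * V ^ 2 := by ring
      _ ≤ 1 := hstep
  have hsplit : ∀ i, x' i = x i * (1 - η * ∑ j, N i j * (x j) ^ 2)
      + η * (s i * ∑ j, N i j * (x j * s j)) := fun i => by
    rw [hx' i]
    have h : ∑ j, N i j * x j * (x i * x j - s i * s j)
        = x i * (∑ j, N i j * (x j) ^ 2) - s i * (∑ j, N i j * (x j * s j)) := by
      rw [Finset.mul_sum, Finset.mul_sum, ← Finset.sum_sub_distrib]
      exact Finset.sum_congr rfl fun j _ => by ring
    rw [h]; ring
  have hBA : ∀ i, ∑ j, N i j * (x j * s j) ≤ V * ∑ j, N i j * (x j) ^ 2 := fun i => by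
    rw [Finset.mul_sum]
    apply Finset.sum_le_sum
    intro j _
    nlinarith [mul_le_mul_of_nonneg_left (hxl j) (mul_nonneg (hnonneg i j) (hx j).le)]
  have hAB : ∀ i, ∑ j, N i j * (x j) ^ 2 ≤ V * ∑ j, N i j * (x j * s j) := fun i => by
    rw [Finset.mul_sum]
    apply Finset.sum_le_sum
    intro j _
    nlinarith [mul_le_mul_of_nonneg_left (hxu j) (mul_nonneg (hnonneg i j) (hx j).le)]
  have hup : ∀ i, x' i ≤ V * s i := fun i => by
    rw [hsplit i]
    have h1 : 0 ≤ 1 - η * ∑ j, N i j * (x j) ^ 2 := by linarith [hηA i]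
    nlinarith [mul_le_mul_of_nonneg_right (hxu i) h1,
      mul_le_mul_of_nonneg_left (hBA i) (mul_pos hη (hs i)).le]
  have hlow : ∀ i, s i ≤ V * x' i := fun i => by
    rw [hsplit i]
    have h1 : 0 ≤ 1 - η * ∑ j, N i j * (x j) ^ 2 := by linarith [hηA i]
    nlinarith [mul_le_mul_of_nonneg_right (hxl i) h1,
      mul_le_mul_of_nonneg_left (hAB i) (mul_pos hη (hs i)).le]
  have hx'pos : ∀ i, 0 < x' i := fun i => by
    nlinarith [hlow i, hs i, hVpos]
  apply ciSup_le
  intro i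
  apply max_le
  · rw [div_le_iff₀ (hs i)]
    exact hup i
  · rw [div_le_iff₀ (hx'pos i)]
    exact hlow i
end

section
/- Suppose s, x^0 ∈ [κ, K]^W with 0 < κ ≤ K, and the gradient-descent iterates x^{t+1}_i = x^t_i − η Σ_j N_{ij} x^t_j (x^t_i x^t_j − s_i s_j) use step-size 0 ≤ η ≤ κ^2 / (K^2 ‖N D_s^2‖_∞). Then for all t, V(x^t) ≤ K/κ and x^t ∈ [κ^2/K, K^2/κ]^W. -/
/-!
Write `ρ = K/κ`. The invariant is that every coordinate ratio `xᵢ/sᵢ` lies in `[1/ρ, ρ]`,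
i.e. `sᵢ ≤ ρ xᵢ` and `xᵢ ≤ ρ sᵢ`; it holds at `t = 0` because both vectors lie in `[κ, K]`.
One step rewrites as `x'ᵢ = xᵢ (1 - η Aᵢ) + η sᵢ Bᵢ` with `Aᵢ = ∑ⱼ Nᵢⱼ xⱼ²`,
`Bᵢ = ∑ⱼ Nᵢⱼ xⱼ sⱼ`. The invariant gives `Aᵢ/ρ ≤ Bᵢ ≤ ρ Aᵢ` and `Aᵢ ≤ ρ² ∑ⱼ Nᵢⱼ sⱼ²`, so the
step-size bound yields `η Aᵢ ≤ 1`; then `x'ᵢ` is a combination with nonnegative weights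
`1 - η Aᵢ` and `η Aᵢ` of quantities already in the band, so the invariant persists.
The box bounds follow from `sᵢ ∈ [κ, K]`.
-/

open Finset

variable {ι : Type*}

def RatioBounded (ρ : ℝ) (s x : ι → ℝ) : Prop :=
  ∀ i, s i ≤ ρ * x i ∧ x i ≤ ρ * s i

lemma ratioBounded_of_mem_Icc {κ K : ℝ} {s x : ι → ℝ} (hκ : 0 < κ)
    (hs : ∀ i, s i ∈ Set.Icc κ K) (hx : ∀ i, x i ∈ Set.Icc κ K) :
    RatioBounded (K / κ) s x := by
  intro i
  have hK : K = K / κ * κ := (div_mul_cancel₀ K hκ.ne').symm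
  have hρ : 0 ≤ K / κ := div_nonneg (hκ.le.trans ((hs i).1.trans (hs i).2)) hκ.le
  constructor
  · calc s i ≤ K := (hs i).2
      _ = K / κ * κ := hK
      _ ≤ K / κ * x i := mul_le_mul_of_nonneg_left (hx i).1 hρ
  · calc x i ≤ K := (hx i).2
      _ = K / κ * κ := hK
      _ ≤ K / κ * s i := mul_le_mul_of_nonneg_left (hs i).1 hρ

namespace RatioBounded

variable {ρ : ℝ} {s x : ι → ℝ}

lemma pos (h : RatioBounded ρ s x) (hρ : 0 < ρ) (hs : ∀ i, 0 < s i) (i : ι) : 0 < x i :=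
  pos_of_mul_pos_right ((hs i).trans_le (h i).1) hρ.le

lemma iSup_max_div_le (h : RatioBounded ρ s x) (hρ : 0 < ρ) (hs : ∀ i, 0 < s i) :
    (⨆ i, max (x i / s i) (s i / x i)) ≤ ρ := by
  refine Real.iSup_le (fun i => max_le ?_ ?_) hρ.le
  · exact (div_le_iff₀ (hs i)).2 (by linarith [h i])
  · exact (div_le_iff₀ (h.pos hρ hs i)).2 (by linarith [h i])

lemma mem_Icc {κ K : ℝ} (h : RatioBounded (K / κ) s x) (hκ : 0 < κ)
    (hs : ∀ i, s i ∈ Set.Icc κ K) (i : ι) : x i ∈ Set.Icc (κ ^ 2 / K) (K ^ 2 / κ) := by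
  have hρ : 0 ≤ K / κ := div_nonneg (hκ.le.trans ((hs i).1.trans (hs i).2)) hκ.le
  have hlo : κ ≤ K / κ * x i := (hs i).1.trans (h i).1
  have hup : x i ≤ K / κ * K := (h i).2.trans (mul_le_mul_of_nonneg_left (hs i).2 hρ)
  rw [div_mul_eq_mul_div, le_div_iff₀ hκ] at hlo hup
  constructor
  · rw [div_le_iff₀ (hκ.trans_le ((hs i).1.trans (hs i).2))]
    linarith
  · rw [le_div_iff₀ hκ]
    linarith

end RatioBounded

section GradientStep

variable [Fintype ι]

def gdStep (N : Matrix ι ι ℝ) (s : ι → ℝ) (η : ℝ) (x : ι → ℝ) (i : ι) : ℝ :=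
  x i - η * ∑ j, N i j * x j * (x i * x j - s i * s j)

lemma gdStep_eq (N : Matrix ι ι ℝ) (s : ι → ℝ) (η : ℝ) (x : ι → ℝ) (i : ι) :
    gdStep N s η x i =
      x i * (1 - η * ∑ j, N i j * x j ^ 2) + η * s i * ∑ j, N i j * (x j * s j) := by
  have hsum : ∑ j, N i j * x j * (x i * x j - s i * s j) =
      x i * ∑ j, N i j * x j ^ 2 - s i * ∑ j, N i j * (x j * s j) := by
    rw [mul_sum, mul_sum, ← sum_sub_distrib]
    exact sum_congr rfl fun j _ => by ring
  rw [gdStep, hsum]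
  ring

namespace RatioBounded

variable {ρ : ℝ} {s x : ι → ℝ} {N : Matrix ι ι ℝ}

lemma sum_mul_sq_le_sq_mul (h : RatioBounded ρ s x) (hN : ∀ i j, 0 ≤ N i j)
    (hx : ∀ j, 0 ≤ x j) (i : ι) :
    ∑ j, N i j * x j ^ 2 ≤ ρ ^ 2 * ∑ j, |N i j| * s j ^ 2 := by
  rw [mul_sum]
  refine sum_le_sum fun j _ => ?_
  rw [abs_of_nonneg (hN i j), mul_left_comm, ← mul_pow]
  exact mul_le_mul_of_nonneg_left (pow_le_pow_left₀ (hx j) (h j).2 2) (hN i j)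

lemma sum_mul_cross_le (h : RatioBounded ρ s x) (hN : ∀ i j, 0 ≤ N i j)
    (hx : ∀ j, 0 ≤ x j) (i : ι) :
    ∑ j, N i j * (x j * s j) ≤ ρ * ∑ j, N i j * x j ^ 2 := by
  rw [mul_sum]
  refine sum_le_sum fun j _ => ?_
  have := mul_le_mul_of_nonneg_left (mul_le_mul_of_nonneg_left (h j).1 (hx j)) (hN i j)
  linarith

lemma sum_mul_sq_le_mul_cross (h : RatioBounded ρ s x) (hN : ∀ i j, 0 ≤ N i j)
    (hx : ∀ j, 0 ≤ x j) (i : ι) :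
    ∑ j, N i j * x j ^ 2 ≤ ρ * ∑ j, N i j * (x j * s j) := by
  rw [mul_sum]
  refine sum_le_sum fun j _ => ?_
  have := mul_le_mul_of_nonneg_left (mul_le_mul_of_nonneg_left (h j).2 (hx j)) (hN i j)
  linarith

lemma gdStep {η : ℝ} (h : RatioBounded ρ s x) (hN : ∀ i j, 0 ≤ N i j) (hx : ∀ j, 0 ≤ x j)
    (hs : ∀ i, 0 ≤ s i) (hη0 : 0 ≤ η) (hstep : ∀ i, η * ∑ j, N i j * x j ^ 2 ≤ 1) :
    RatioBounded ρ s (gdStep N s η x) := by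
  intro i
  have hA : 0 ≤ η * ∑ j, N i j * x j ^ 2 :=
    mul_nonneg hη0 (sum_nonneg fun j _ => mul_nonneg (hN i j) (sq_nonneg (x j)))
  have hw := sub_nonneg.2 (hstep i)
  have hηs := mul_nonneg hη0 (hs i)
  have hlo := h.sum_mul_sq_le_mul_cross hN hx i
  have hup := h.sum_mul_cross_le hN hx i
  rw [gdStep_eq]
  constructor
  · nlinarith [mul_le_mul_of_nonneg_right (h i).1 hw, mul_le_mul_of_nonneg_left hlo hηs]
  · nlinarith [mul_le_mul_of_nonneg_right (h i).2 hw, mul_le_mul_of_nonneg_left hup hηs]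

end RatioBounded

theorem ratioBounded_of_gdStep_recurrence {ρ η : ℝ} {N : Matrix ι ι ℝ} {s : ι → ℝ}
    (hρ : 0 < ρ) (hN : ∀ i j, 0 ≤ N i j) (hs : ∀ i, 0 < s i) (hη0 : 0 ≤ η)
    (hη : ∀ i, η * ρ ^ 2 * ∑ j, |N i j| * s j ^ 2 ≤ 1)
    {x : ℕ → ι → ℝ} (hx0 : RatioBounded ρ s (x 0))
    (hrec : ∀ t, x (t + 1) = gdStep N s η (x t)) (t : ℕ) :
    RatioBounded ρ s (x t) := by
  induction t with
  | zero => exact hx0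
  | succ t ih =>
    have hx : ∀ j, 0 ≤ x t j := fun j => (ih.pos hρ hs j).le
    have hstep : ∀ i, η * ∑ j, N i j * x t j ^ 2 ≤ 1 := fun i => by
      have := mul_le_mul_of_nonneg_left (ih.sum_mul_sq_le_sq_mul hN hx i) hη0
      linarith [hη i]
    rw [hrec]
    exact ih.gdStep hN hx (fun i => (hs i).le) hη0 hstep

end GradientStep

lemma mul_le_one_of_le_inv_ciSup [Finite ι] {C : ι → ℝ} (hC : ∀ i, 0 ≤ C i)
    {η : ℝ} (hη : η ≤ (⨆ i, C i)⁻¹) (i : ι) : η * C i ≤ 1 := by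
  have hCi : C i ≤ ⨆ i, C i := le_ciSup (Set.finite_range C).bddAbove i
  calc η * C i ≤ (⨆ i, C i)⁻¹ * C i := mul_le_mul_of_nonneg_right hη (hC i)
    _ ≤ 1 := inv_mul_le_one_of_le₀ hCi ((hC i).trans hCi)

theorem stmt10_general (W : ℕ) (N : Matrix (Fin W) (Fin W) ℝ)
    (hnonneg : ∀ i j, 0 ≤ N i j)
    (κ K : ℝ) (hκ : 0 < κ) (hκK : κ ≤ K)
    (s : Fin W → ℝ) (hs : ∀ i, s i ∈ Set.Icc κ K)
    (η : ℝ) (hη0 : 0 ≤ η)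
    (hη : η ≤ κ ^ 2 / (K ^ 2 * (⨆ i, ∑ j, |N i j| * (s j) ^ 2)))
    (x : ℕ → Fin W → ℝ) (hx0 : ∀ i, x 0 i ∈ Set.Icc κ K)
    (hrec : ∀ t i, x (t + 1) i =
      x t i - η * ∑ j, N i j * x t j * (x t i * x t j - s i * s j)) :
    ∀ t, (⨆ i, max (x t i / s i) (s i / x t i)) ≤ K / κ ∧
      ∀ i, x t i ∈ Set.Icc (κ ^ 2 / K) (K ^ 2 / κ) := by
  have hρ : 0 < K / κ := div_pos (hκ.trans_le hκK) hκ
  have hspos : ∀ i, 0 < s i := fun i => hκ.trans_le (hs i).1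
  have hstep : ∀ i, η * (K / κ) ^ 2 * ∑ j, |N i j| * s j ^ 2 ≤ 1 := by
    have hη' : η * (K / κ) ^ 2 ≤ (⨆ i, ∑ j, |N i j| * s j ^ 2)⁻¹ := by
      rw [← le_inv_mul_iff₀' (pow_pos hρ 2)]
      exact hη.trans_eq (by rw [div_pow, inv_div]; ring)
    exact mul_le_one_of_le_inv_ciSup
      (fun i => sum_nonneg fun j _ => mul_nonneg (abs_nonneg _) (sq_nonneg _)) hη'
  intro t
  have hband := ratioBounded_of_gdStep_recurrence hρ hnonneg hspos hη0 hstep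
    (ratioBounded_of_mem_Icc hκ hs hx0) (fun t => funext (hrec t)) t
  exact ⟨hband.iSup_max_div_le hρ hspos, hband.mem_Icc hκ hs⟩

/-- If `s, x⁰ ∈ [κ,K]^W` and the gradient-descent step-size satisfies
`0 ≤ η ≤ κ²/(K² ‖N D_s²‖_∞)`, then all iterates satisfy `V(xᵗ) ≤ K/κ`
and `xᵗ ∈ [κ²/K, K²/κ]^W`. -/
theorem stmt10 (W : ℕ) (N : Matrix (Fin W) (Fin W) ℝ)
    (hsymm : ∀ i j, N i j = N j i) (hnonneg : ∀ i j, 0 ≤ N i j)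
    (hdiag : ∀ i, N i i = 0)
    (κ K : ℝ) (hκ : 0 < κ) (hκK : κ ≤ K)
    (s : Fin W → ℝ) (hs : ∀ i, s i ∈ Set.Icc κ K)
    (η : ℝ) (hη0 : 0 ≤ η)
    (hη : η ≤ κ ^ 2 / (K ^ 2 * (⨆ i, ∑ j, |N i j| * (s j) ^ 2)))
    (x : ℕ → Fin W → ℝ) (hx0 : ∀ i, x 0 i ∈ Set.Icc κ K)
    (hrec : ∀ t i, x (t + 1) i =
      x t i - η * ∑ j, N i j * x t j * (x t i * x t j - s i * s j)) :
    ∀ t, (⨆ i, max (x t i / s i) (s i / x t i)) ≤ K / κ ∧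
      ∀ i, x t i ∈ Set.Icc (κ ^ 2 / K) (K ^ 2 / κ) :=
  stmt10_general W N hnonneg κ K hκ hκK s hs η hη0 hη x hx0 hrec
end

section
/- Let L(x) = (1/2) Σ_{(i,j)∈E} N_{ij} (s_i s_j − x_i x_j)^2 with N symmetric nonnegative and s ∈ [κ, K]^W, 0 < κ ≤ K. Then for all y, z ∈ [0, K^2/κ]^W, ‖∇L(y) − ∇L(z)‖_2 ≤ L̂ ‖y − z‖_2 with L̂ = 4 W ‖N‖_F K^4/κ^2. -/
/-!
Write `B = K²/κ`; since `κ ≤ K` we have `K ≤ B`, so every `yᵢ, zᵢ, sᵢ` lies in `[-B, B]` and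
`|sᵢ sⱼ| ≤ B²`. The identity
`(yᵢyⱼ - p) yⱼ - (zᵢzⱼ - p) zⱼ = (yᵢ - zᵢ) yⱼ² + (zᵢ (yⱼ + zⱼ) - p)(yⱼ - zⱼ)`
bounds each summand of `∇L(y)ᵢ - ∇L(z)ᵢ` by `|Nᵢⱼ| · 4B²‖y - z‖`, and Cauchy–Schwarz on the
rows of `N` turns this into `‖∇L(y) - ∇L(z)‖ ≤ √W ‖N‖_F · 4B² ‖y - z‖ ≤ L̂ ‖y - z‖`.
-/

open Finset

section WeightedSums

variable {ι : Type*} [Fintype ι]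

lemma abs_sub_le_sqrt_sum_sq_sub (y z : ι → ℝ) (i : ι) :
    |y i - z i| ≤ √(∑ k, (y k - z k) ^ 2) :=
  Real.abs_le_sqrt <|
    single_le_sum (f := fun k => (y k - z k) ^ 2) (fun _ _ => sq_nonneg _) (mem_univ i)

lemma sq_sum_abs_le_card_mul_sum_sq (v : ι → ℝ) :
    (∑ j, |v j|) ^ 2 ≤ Fintype.card ι * ∑ j, v j ^ 2 := by
  simpa only [sq_abs, card_univ] using sq_sum_le_card_mul_sum_sq (s := univ) (f := fun j => |v j|)

lemma sum_sq_weighted_sum_sub_le (N f g : ι → ι → ℝ) {M : ℝ}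
    (h : ∀ i j, |f i j - g i j| ≤ M) :
    ∑ i, (∑ j, N i j * f i j - ∑ j, N i j * g i j) ^ 2
      ≤ Fintype.card ι * (∑ i, ∑ j, N i j ^ 2) * M ^ 2 := by
  have hrow : ∀ i, |∑ j, N i j * f i j - ∑ j, N i j * g i j| ≤ (∑ j, |N i j|) * M := by
    intro i
    rw [← sum_sub_distrib, sum_mul]
    refine (abs_sum_le_sum_abs _ _).trans (sum_le_sum fun j _ => ?_)
    rw [← mul_sub, abs_mul]
    exact mul_le_mul_of_nonneg_left (h i j) (abs_nonneg _)
  calc ∑ i, (∑ j, N i j * f i j - ∑ j, N i j * g i j) ^ 2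
      ≤ ∑ i, ((∑ j, |N i j|) * M) ^ 2 := sum_le_sum fun i _ => by
        rw [← sq_abs]; exact pow_le_pow_left₀ (abs_nonneg _) (hrow i) 2
    _ = (∑ i, (∑ j, |N i j|) ^ 2) * M ^ 2 := by simp_rw [mul_pow, ← sum_mul]
    _ ≤ (∑ i, Fintype.card ι * ∑ j, N i j ^ 2) * M ^ 2 :=
        mul_le_mul_of_nonneg_right
          (sum_le_sum fun i _ => sq_sum_abs_le_card_mul_sum_sq (N i)) (sq_nonneg _)
    _ = Fintype.card ι * (∑ i, ∑ j, N i j ^ 2) * M ^ 2 := by rw [← mul_sum]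

end WeightedSums

lemma abs_mul_sub_mul_sub_le {a b c d p B D : ℝ} (ha : |a| ≤ B) (hb : |b| ≤ B)
    (hc : |c| ≤ B) (hd : |d| ≤ B) (hp : |p| ≤ B ^ 2) (hac : |a - c| ≤ D)
    (hbd : |b - d| ≤ D) :
    |(a * b - p) * b - (c * d - p) * d| ≤ 4 * B ^ 2 * D := by
  have hB : 0 ≤ B := (abs_nonneg a).trans ha
  have hD : 0 ≤ D := (abs_nonneg _).trans hac
  have hb2 : |b ^ 2| ≤ B ^ 2 := by
    rw [abs_pow]; exact pow_le_pow_left₀ (abs_nonneg b) hb 2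
  have hmid : |c * (b + d) - p| ≤ 3 * B ^ 2 := by
    have hcbd : |c * (b + d)| ≤ B * (B + B) := by
      rw [abs_mul]
      exact mul_le_mul hc ((abs_add_le b d).trans (add_le_add hb hd)) (abs_nonneg _) hB
    linarith [abs_sub (c * (b + d)) p]
  calc |(a * b - p) * b - (c * d - p) * d|
      = |(a - c) * b ^ 2 + (c * (b + d) - p) * (b - d)| := by ring_nf
    _ ≤ |a - c| * |b ^ 2| + |c * (b + d) - p| * |b - d| := by
        rw [← abs_mul, ← abs_mul]; exact abs_add_le _ _
    _ ≤ D * B ^ 2 + 3 * B ^ 2 * D := by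
        gcongr
    _ = 4 * B ^ 2 * D := by ring

theorem stmt12_general (W : ℕ) (N : Matrix (Fin W) (Fin W) ℝ)
    (κ K : ℝ) (hκ : 0 < κ) (hκK : κ ≤ K)
    (s : Fin W → ℝ) (hs : ∀ i, s i ∈ Set.Icc κ K)
    (y z : Fin W → ℝ)
    (hy : ∀ i, y i ∈ Set.Icc (0 : ℝ) (K ^ 2 / κ))
    (hz : ∀ i, z i ∈ Set.Icc (0 : ℝ) (K ^ 2 / κ)) :
    Real.sqrt (∑ i, ((∑ j, N i j * (y i * y j - s i * s j) * y j)
        - (∑ j, N i j * (z i * z j - s i * s j) * z j)) ^ 2)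
      ≤ (4 * W * Real.sqrt (∑ i, ∑ j, (N i j) ^ 2) * K ^ 4 / κ ^ 2) *
        Real.sqrt (∑ i, (y i - z i) ^ 2) := by
  set B := K ^ 2 / κ
  set D := √(∑ i, (y i - z i) ^ 2)
  set F := √(∑ i, ∑ j, N i j ^ 2)
  have hK : 0 < K := hκ.trans_le hκK
  have hKB : K ≤ B := by rw [le_div_iff₀ hκ]; nlinarith
  have hIcc_abs {a lo hi : ℝ} (h : a ∈ Set.Icc lo hi) (hlo : 0 ≤ lo) : |a| ≤ hi :=
    abs_le.mpr ⟨by linarith [h.1, h.2], h.2⟩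
  have hss : ∀ i j, |s i * s j| ≤ B ^ 2 := fun i j => by
    rw [abs_mul, sq]
    exact mul_le_mul ((hIcc_abs (hs i) hκ.le).trans hKB) ((hIcc_abs (hs j) hκ.le).trans hKB)
      (abs_nonneg _) (hK.le.trans hKB)
  have hterm : ∀ i j, |(y i * y j - s i * s j) * y j - (z i * z j - s i * s j) * z j|
      ≤ 4 * B ^ 2 * D := fun i j =>
    abs_mul_sub_mul_sub_le (hIcc_abs (hy i) le_rfl) (hIcc_abs (hy j) le_rfl)
      (hIcc_abs (hz i) le_rfl) (hIcc_abs (hz j) le_rfl) (hss i j)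
      (abs_sub_le_sqrt_sum_sq_sub y z i) (abs_sub_le_sqrt_sum_sq_sub y z j)
  have hsum := sum_sq_weighted_sum_sub_le N _ _ fun i j => hterm i j
  have hW : (W : ℝ) ≤ (W : ℝ) ^ 2 := by exact_mod_cast Nat.le_self_pow two_ne_zero W
  rw [Fintype.card_fin, ← Real.sq_sqrt (by positivity : (0 : ℝ) ≤ ∑ i, ∑ j, N i j ^ 2)] at hsum
  simp only [mul_assoc]
  rw [Real.sqrt_le_left (by positivity)]
  calc _ ≤ (W : ℝ) * F ^ 2 * (4 * B ^ 2 * D) ^ 2 := hsum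
    _ ≤ (W : ℝ) ^ 2 * F ^ 2 * (4 * B ^ 2 * D) ^ 2 := by gcongr
    _ = _ := by ring

/-- The gradient `∇L(x)_i = Σ_j N_{ij}(x_i x_j − s_i s_j) x_j` of the weighted rank-one
loss is Lipschitz on `[0, K²/κ]^W` with constant `L̂ = 4 W ‖N‖_F K⁴/κ²`. -/
theorem stmt12 (W : ℕ) (N : Matrix (Fin W) (Fin W) ℝ)
    (hsymm : ∀ i j, N i j = N j i) (hnonneg : ∀ i j, 0 ≤ N i j)
    (κ K : ℝ) (hκ : 0 < κ) (hκK : κ ≤ K)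
    (s : Fin W → ℝ) (hs : ∀ i, s i ∈ Set.Icc κ K)
    (y z : Fin W → ℝ)
    (hy : ∀ i, y i ∈ Set.Icc (0 : ℝ) (K ^ 2 / κ))
    (hz : ∀ i, z i ∈ Set.Icc (0 : ℝ) (K ^ 2 / κ)) :
    Real.sqrt (∑ i, ((∑ j, N i j * (y i * y j - s i * s j) * y j)
        - (∑ j, N i j * (z i * z j - s i * s j) * z j)) ^ 2)
      ≤ (4 * W * Real.sqrt (∑ i, ∑ j, (N i j) ^ 2) * K ^ 4 / κ ^ 2) *
        Real.sqrt (∑ i, (y i - z i) ^ 2) :=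
  stmt12_general W N κ K hκ hκK s hs y z hy hz
end

section
/- Let g_0(z) = (1/2) Σ_{i,j} N_{ij} e^{z_i + z_j} − Σ_i z_i Σ_j N_{ij} s_i s_j with N symmetric nonnegative, zero diagonal. Then the Hessian of g_0 at z equals the signless Laplacian with weights N_{ij} e^{z_i + z_j}; i.e., ∇²g_0(z) = Σ_{i<j} N_{ij} e^{z_i + z_j} (e_i + e_j)(e_i + e_j)^T. Consequently, if the graph of N is connected and non-bipartite, g_0 is strictly convex on R^W, and z = ln s (entrywise logarithm, for s > 0 entrywise) is its unique critical point. -/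
/-!
The function `g₀` is a nonnegative combination of exponentials of the edge forms `z_i + z_j`
minus a linear term, so it is convex, and strictly so as soon as the edge sums `z_i + z_j`
(over the pairs with `N_ij > 0`) determine `z`. They do on a connected graph with an odd cycle:
if `u_i + u_j = 0` along every edge then `u_i = ± u_v` along any walk, and a closed walk of odd
length through `v` forces `u_v = -u_v`.

For the critical points, pairing the equations `∑_j N_ij (e^{z_i+z_j} - e^{w_i+w_j}) = 0`,
`w = ln s`, with `z - w` and symmetrising gives
`∑_{i,j} N_ij ((z_i+z_j) - (w_i+w_j)) (e^{z_i+z_j} - e^{w_i+w_j}) = 0`, a sum of nonnegative terms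
by monotonicity of `exp`. Hence every edge sum of `z` equals that of `w`, and `z = w`.
-/

open Real Finset Function

namespace SimpleGraph

variable {V : Type*} {G : SimpleGraph V}

theorem Walk.apply_eq_neg_one_pow_mul {d : V → ℝ} (h : ∀ i j, G.Adj i j → d i + d j = 0)
    {u v : V} (p : G.Walk u v) : d u = (-1) ^ p.length * d v := by
  induction p with
  | nil => simp
  | @cons u a v hua q ih =>
    rw [Walk.length_cons, pow_succ, eq_neg_of_add_eq_zero_left (h u a hua), ih]
    ring

theorem Connected.eq_of_forall_adj_add_eq (hconn : G.Connected) {v : V} (p : G.Walk v v)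
    (hp : Odd p.length) {x y : V → ℝ} (h : ∀ i j, G.Adj i j → x i + x j = y i + y j) :
    x = y := by
  have hd : ∀ i j, G.Adj i j → (x - y) i + (x - y) j = 0 := fun i j hij => by
    simp only [Pi.sub_apply]; linarith [h i j hij]
  have hv : (x - y) v = 0 := by
    have := p.apply_eq_neg_one_pow_mul hd
    rw [hp.neg_one_pow] at this
    linarith
  funext i
  obtain ⟨q⟩ := hconn.preconnected i v
  rw [← sub_eq_zero, ← Pi.sub_apply, q.apply_eq_neg_one_pow_mul hd, hv, mul_zero]

end SimpleGraph

theorem strictConvexOn_sum_mul_exp {ι E : Type*} [Fintype ι] [AddCommMonoid E] [Module ℝ E]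
    {w : ι → ℝ} (hw : ∀ i, 0 ≤ w i) (ℓ : ι → E →ₗ[ℝ] ℝ)
    (hsep : ∀ x y, (∀ i, 0 < w i → ℓ i x = ℓ i y) → x = y) :
    StrictConvexOn ℝ Set.univ (fun x => ∑ i, w i * exp (ℓ i x)) := by
  refine ⟨convex_univ, fun x _ y _ hxy a b ha hb hab => ?_⟩
  obtain ⟨i₀, hw₀, hne⟩ : ∃ i, 0 < w i ∧ ℓ i x ≠ ℓ i y := by
    by_contra! h
    exact hxy (hsep x y h)
  have hterm : ∀ i, w i * exp (ℓ i (a • x + b • y))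
      ≤ a * (w i * exp (ℓ i x)) + b * (w i * exp (ℓ i y)) := fun i => by
    have := convexOn_exp.2 (Set.mem_univ (ℓ i x)) (Set.mem_univ (ℓ i y)) ha.le hb.le hab
    simp only [smul_eq_mul, map_add, map_smul] at this ⊢
    nlinarith [hw i]
  have hterm₀ : w i₀ * exp (ℓ i₀ (a • x + b • y))
      < a * (w i₀ * exp (ℓ i₀ x)) + b * (w i₀ * exp (ℓ i₀ y)) := by
    have := strictConvexOn_exp.2 (Set.mem_univ _) (Set.mem_univ _) hne ha hb hab
    simp only [smul_eq_mul, map_add, map_smul] at this ⊢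
    nlinarith
  calc ∑ i, w i * exp (ℓ i (a • x + b • y))
      < ∑ i, (a * (w i * exp (ℓ i x)) + b * (w i * exp (ℓ i y))) :=
        sum_lt_sum (fun i _ => hterm i) ⟨i₀, mem_univ _, hterm₀⟩
    _ = a • ∑ i, w i * exp (ℓ i x) + b • ∑ i, w i * exp (ℓ i y) := by
        simp only [sum_add_distrib, mul_sum, smul_eq_mul]

theorem strictConvexOn_half_sum_mul_exp_add_sub {ι : Type*} [Fintype ι] {N : ι → ι → ℝ}
    (hnonneg : ∀ a b, 0 ≤ N a b) (c : ι → ℝ)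
    (hsep : ∀ x y : ι → ℝ, (∀ i j, 0 < N i j → x i + x j = y i + y j) → x = y) :
    StrictConvexOn ℝ Set.univ
      (fun z : ι → ℝ => (1 / 2) * ∑ a, ∑ b, N a b * exp (z a + z b) - ∑ a, z a * c a) := by
  have hexp := strictConvexOn_sum_mul_exp (w := fun p : ι × ι => N p.1 p.2 / 2)
    (fun p => div_nonneg (hnonneg _ _) zero_le_two)
    (fun p => LinearMap.proj (R := ℝ) (φ := fun _ => ℝ) p.1 + LinearMap.proj p.2)
    fun x y h => hsep x y fun i j hij => by
      simpa only [LinearMap.add_apply, LinearMap.proj_apply] using h (i, j) (half_pos hij)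
  have hlin := (∑ a, c a • LinearMap.proj a : (ι → ℝ) →ₗ[ℝ] ℝ).concaveOn convex_univ
  refine (hexp.sub_concaveOn hlin).congr fun z _ => ?_
  simp only [Pi.sub_apply, LinearMap.add_apply, LinearMap.proj_apply, LinearMap.sum_apply,
    LinearMap.smul_apply, smul_eq_mul, Fintype.sum_prod_type, mul_sum]
  congr 1
  · exact sum_congr rfl fun _ _ => sum_congr rfl fun _ _ => by ring
  · exact sum_congr rfl fun _ _ => mul_comm _ _

theorem sum_sum_mul_add_of_symm {ι : Type*} [Fintype ι] {M : ι → ι → ℝ}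
    (hM : ∀ i j, M i j = M j i) (u : ι → ℝ) :
    ∑ i, ∑ j, M i j * (u i + u j) = 2 * ∑ i, u i * ∑ j, M i j := by
  have hrow : ∑ i, ∑ j, M i j * u i = ∑ i, u i * ∑ j, M i j := by
    simp only [mul_sum, mul_comm]
  have hcol : ∑ i, ∑ j, M i j * u j = ∑ i, u i * ∑ j, M i j := by
    rw [sum_comm, ← hrow]
    simp only [hM]
  simp only [mul_add, sum_add_distrib, hrow, hcol, two_mul]

theorem StrictMono.eq_of_sub_mul_sub_eq_zero {f : ℝ → ℝ} (hf : StrictMono f) {p q : ℝ}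
    (h : (p - q) * (f p - f q) = 0) : p = q := by
  rcases mul_eq_zero.1 h with h | h
  · exact sub_eq_zero.1 h
  · exact hf.injective (sub_eq_zero.1 h)

theorem StrictMono.sub_mul_sub_nonneg {f : ℝ → ℝ} (hf : StrictMono f) (p q : ℝ) :
    0 ≤ (p - q) * (f p - f q) := by
  rcases le_total p q with h | h
  · exact mul_nonneg_of_nonpos_of_nonpos (by linarith) (sub_nonpos.2 (hf.monotone h))
  · exact mul_nonneg (by linarith) (sub_nonneg.2 (hf.monotone h))

theorem add_eq_add_of_forall_sum_mul_sub_eq_zero {ι : Type*} [Fintype ι] {N : ι → ι → ℝ}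
    (hsymm : ∀ a b, N a b = N b a) (hnonneg : ∀ a b, 0 ≤ N a b) {f : ℝ → ℝ}
    (hf : StrictMono f) {z w : ι → ℝ}
    (hz : ∀ i, ∑ j, N i j * (f (z i + z j) - f (w i + w j)) = 0) {i j : ι} (hij : 0 < N i j) :
    z i + z j = w i + w j := by
  set M : ι → ι → ℝ := fun i j => N i j * (f (z i + z j) - f (w i + w j))
  have hM : ∀ i j, M i j = M j i := fun i j => by simp only [M, hsymm i j, add_comm]
  have hterm : ∀ i j, 0 ≤ M i j * ((z - w) i + (z - w) j) := fun i j => by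
    have := hf.sub_mul_sub_nonneg (z i + z j) (w i + w j)
    simp only [M, Pi.sub_apply]
    nlinarith [hnonneg i j]
  have hsum : ∑ i, ∑ j, M i j * ((z - w) i + (z - w) j) = 0 := by
    simp [sum_sum_mul_add_of_symm hM, M, hz]
  have hzero := (sum_eq_zero_iff_of_nonneg fun j _ => hterm i j).1
    ((sum_eq_zero_iff_of_nonneg fun i _ => sum_nonneg fun j _ => hterm i j).1 hsum i
      (mem_univ i)) j (mem_univ j)
  refine hf.eq_of_sub_mul_sub_eq_zero ((mul_eq_zero.1 ?_).resolve_left hij.ne')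
  simp only [M, Pi.sub_apply] at hzero
  linear_combination hzero

theorem hasDerivAt_sum_mul_exp_update {ι : Type*} [Fintype ι] [DecidableEq ι]
    {N : ι → ι → ℝ} (hdiag : ∀ a, N a a = 0) (z : ι → ℝ) (i j : ι) :
    HasDerivAt (fun t => ∑ k, N i k * exp (update z j t i + update z j t k))
      (if i = j then ∑ k, N i k * exp (z i + z k) else N i j * exp (z i + z j)) (z j) := by
  have hcoord (k : ι) : HasDerivAt (fun t => update z j t k) ((Pi.single j 1 : ι → ℝ) k) (z j) :=
    hasDerivAt_pi.1 (hasDerivAt_update z j (z j)) k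
  refine (HasDerivAt.fun_sum fun k _ =>
    (((hcoord i).fun_add (hcoord k)).exp.const_mul (N i k))).congr_deriv ?_
  split_ifs with hij
  · subst hij
    simp [Pi.single_apply, mul_add, sum_add_distrib, hdiag]
  · simp [Pi.single_apply, hij]

/-- For `g₀(z) = (1/2) Σ_{a,b} N_{ab} e^{z_a+z_b} − Σ_a z_a Σ_b N_{ab} s_a s_b`:
(1) the Hessian of `g₀` at `z` is the signless Laplacian with weights `N_{ij} e^{z_i+z_j}`
(entrywise: `N_{ij}e^{z_i+z_j}` off the diagonal and `Σ_k N_{ik} e^{z_i+z_k}` on it);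
(2) if the graph of `N` is connected and non-bipartite, `g₀` is strictly convex on `ℝ^W`;
(3) `z = ln s` is the unique critical point of `g₀` (for entrywise positive `s`). -/
theorem stmt16 (W : ℕ) (N : Matrix (Fin W) (Fin W) ℝ)
    (hsymm : ∀ a b, N a b = N b a) (hnonneg : ∀ a b, 0 ≤ N a b)
    (hdiag : ∀ a, N a a = 0)
    (G : SimpleGraph (Fin W)) (hadj : ∀ i j, G.Adj i j ↔ i ≠ j ∧ 0 < N i j)
    (hconn : G.Connected)
    (hodd : ∃ (v : Fin W) (p : G.Walk v v), p.IsCycle ∧ Odd p.length)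
    (s : Fin W → ℝ) (hs : ∀ i, 0 < s i) :
    (∀ (z : Fin W → ℝ) (i j : Fin W),
      HasDerivAt (fun t : ℝ =>
          ∑ k, N i k *
              Real.exp ((Function.update z j t) i + (Function.update z j t) k)
          - ∑ k, N i k * (s i * s k))
        (if i = j then ∑ k, N i k * Real.exp (z i + z k)
         else N i j * Real.exp (z i + z j)) (z j))
    ∧ StrictConvexOn ℝ Set.univ (fun z : Fin W → ℝ =>
        (1/2) * ∑ a, ∑ b, N a b * Real.exp (z a + z b)
          - ∑ a, z a * ∑ b, N a b * (s a * s b))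
    ∧ (∀ z : Fin W → ℝ,
        (∀ i, ∑ j, N i j * (Real.exp (z i + z j) - s i * s j) = 0)
          ↔ z = fun i => Real.log (s i)) := by
  have hsep : ∀ x y : Fin W → ℝ, (∀ i j, 0 < N i j → x i + x j = y i + y j) → x = y := by
    obtain ⟨v, p, -, hp⟩ := hodd
    exact fun x y h => hconn.eq_of_forall_adj_add_eq p hp fun i j hij => h i j ((hadj i j).1 hij).2
  have hexp_log (i j : Fin W) : exp (log (s i) + log (s j)) = s i * s j := by
    rw [exp_add, exp_log (hs i), exp_log (hs j)]
  refine ⟨fun z i j => (hasDerivAt_sum_mul_exp_update hdiag z i j).sub_const _,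
    strictConvexOn_half_sum_mul_exp_add_sub hnonneg _ hsep,
    fun z => ⟨fun hz => hsep _ _ fun i j hij => ?_, ?_⟩⟩
  · simp only [← hexp_log] at hz
    exact add_eq_add_of_forall_sum_mul_sub_eq_zero hsymm hnonneg exp_strictMono hz hij
  · rintro rfl i
    simp [hexp_log]
end
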